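/- For all integers n ≥ 1 and m with 1 ≤ m ≤ n, the cycle Stirling numbers satisfy (-1)^(n-m) · [n, m] · (-n)^m = Σ_{h=m}^{n} C(h-1, m-1) · [n, h] · (-n)^h, where the equality holds in the integers. -/
import Mathlib

open Polynomial Finset

/-- Unsigned Stirling numbers of the first kind (cycle Stirling numbers). -/
def stirling1 : ℕ → ℕ → ℕ
  | 0, 0 => 1
  | 0, _ + 1 => 0
  | _ + 1, 0 => 0
  | n + 1, k + 1 => n * stirling1 n (k + 1) + stirling1 n k

lemma stirling1_zero_right : ∀ n : ℕ, 1 ≤ n → stirling1 n 0 = 0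
  | _+1, _ => rfl

lemma stirling1_eq_zero : ∀ n k : ℕ, n < k → stirling1 n k = 0
  | 0, _+1, _ => rfl
  | n+1, k+1, h => by
      show n * stirling1 n (k + 1) + stirling1 n k = 0
      rw [stirling1_eq_zero n (k+1) (by omega), stirling1_eq_zero n k (by omega)]
      simp

lemma ascP_coeff : ∀ n k : ℕ, (ascPochhammer ℤ n).coeff k = stirling1 n k
  | 0, 0 => by simp [stirling1]
  | 0, k+1 => by simp [stirling1, Polynomial.coeff_one]
  | n+1, k => by
    rw [ascPochhammer_succ_right, ← C_eq_natCast, mul_add, coeff_add, coeff_mul_C]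
    cases k with
    | zero =>
      rw [coeff_mul_X_zero, ascP_coeff n 0]
      cases n with
      | zero => simp [stirling1]
      | succ n => simp [stirling1, stirling1_zero_right]
    | succ k =>
      rw [coeff_mul_X, ascP_coeff n k, ascP_coeff n (k+1)]
      show _ = ((n * stirling1 n (k+1) + stirling1 n k : ℕ) : ℤ)
      push_cast; ring

lemma descP_coeff : ∀ n k : ℕ, (descPochhammer ℤ n).coeff k = (-1)^(n-k) * stirling1 n k
  | 0, 0 => by simp [stirling1]
  | 0, k+1 => by simp [stirling1, Polynomial.coeff_one]
  | n+1, k => by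
    rw [descPochhammer_succ_right, ← C_eq_natCast, mul_sub, coeff_sub, coeff_mul_C]
    cases k with
    | zero =>
      rw [coeff_mul_X_zero, descP_coeff n 0]
      cases n with
      | zero => simp [stirling1]
      | succ n => simp [stirling1, stirling1_zero_right]
    | succ k =>
      rw [coeff_mul_X, descP_coeff n k, descP_coeff n (k+1)]
      rcases lt_or_ge k n with h | h
      · have h1 : n - k = (n - (k+1)) + 1 := by omega
        have h2 : (n+1) - (k+1) = (n - (k+1)) + 1 := by omega
        rw [h1, h2]
        show _ = (-1:ℤ)^(n-(k+1)+1) * ((n * stirling1 n (k+1) + stirling1 n k : ℕ) : ℤ)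
        push_cast; ring
      · have h2 : (n+1)-(k+1) = n - k := by omega
        rw [h2, stirling1_eq_zero n (k+1) (by omega)]
        show _ = (-1:ℤ)^(n-k) * ((n * stirling1 n (k+1) + stirling1 n k : ℕ) : ℤ)
        rw [stirling1_eq_zero n (k+1) (by omega)]
        push_cast; ring

lemma key : ∀ n : ℕ, X * ((ascPochhammer ℤ n).comp (X - C (n:ℤ))) = descPochhammer ℤ (n+1)
  | 0 => by simp
  | n+1 => by
    have hs : (X : ℤ[X]) - C (((n+1:ℕ)):ℤ) = (X - C (n:ℤ)).comp (X - 1) := by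
      rw [sub_comp, X_comp, C_comp]; push_cast [C_add, C_1]; ring
    have hC : C (((n+1:ℕ)):ℤ) = C ((n:ℤ)) + 1 := by push_cast [C_add, C_1]; ring
    rw [descPochhammer_succ_left, ← key n, mul_comp, X_comp, comp_assoc, ← hs,
      ascPochhammer_succ_right, ← C_eq_natCast, mul_comp, add_comp, X_comp, C_comp, hC]
    ring

lemma coeff_comp_X_sub_C (p : ℤ[X]) (a : ℤ) (k N : ℕ) (hN : p.natDegree < N) :
    (p.comp (X - C a)).coeff k
      = ∑ h ∈ Finset.range N, p.coeff h * ((-a)^(h-k) * (h.choose k : ℤ)) := by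
  conv_lhs => rw [p.as_sum_range' N hN]
  rw [Polynomial.comp, eval₂_finset_sum, finset_sum_coeff]
  refine Finset.sum_congr rfl fun h _ => ?_
  rw [eval₂_monomial, sub_eq_add_neg, ← C_neg, coeff_C_mul, coeff_X_add_C_pow]

theorem stirling1_identity_recst4 (n m : ℕ) (hm : 1 ≤ m) (hmn : m ≤ n) :
    (-1) ^ (n - m) * (stirling1 n m : ℤ) * (-(n : ℤ)) ^ m =
      ∑ h ∈ Finset.Icc m n, ((h - 1).choose (m - 1) : ℤ) * stirling1 n h * (-(n : ℤ)) ^ h := by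
  have hn1 : 1 ≤ n := le_trans hm hmn
  set P := ascPochhammer ℤ n with hPdef
  have hP0 : P.coeff 0 = 0 := by
    rw [hPdef, ascP_coeff, stirling1_zero_right n hn1, Nat.cast_zero]
  have hPX : P = X * P.divX := by
    conv_lhs => rw [← X_mul_divX_add P]
    rw [hP0, C_0, add_zero]
  have hkey : X * ((X * P.divX).comp (X - C (n:ℤ))) = descPochhammer ℤ (n+1) := by
    rw [← hPX]; exact key n
  rw [mul_comp, X_comp, descPochhammer_succ_right, ← C_eq_natCast] at hkey
  have hcancel : X * (P.divX).comp (X - C (n:ℤ)) = descPochhammer ℤ n := by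
    refine mul_right_cancel₀ (X_sub_C_ne_zero (n:ℤ)) ?_
    rw [← hkey]; ring
  have hdeg : (P.divX).natDegree < n + 1 := by
    have := natDegree_divX_le (p := P)
    have h2 : P.natDegree = n := ascPochhammer_natDegree (S := ℤ) n
    omega
  have hcoeff := congrArg (fun q => q.coeff m) hcancel
  obtain ⟨m', rfl⟩ : ∃ m', m = m' + 1 := ⟨m - 1, by omega⟩
  simp only [coeff_X_mul] at hcoeff
  rw [coeff_comp_X_sub_C (P.divX) (n:ℤ) m' (n+1) hdeg, descP_coeff] at hcoeff
  simp only [coeff_divX, hPdef, ascP_coeff] at hcoeff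
  -- hcoeff : ∑ h ∈ range (n+1), ↑(stirling1 n (h+1)) * ((-↑n)^(h-m') * ↑(h.choose m'))
  --            = (-1)^(n-(m'+1)) * ↑(stirling1 n (m'+1))
  calc (-1:ℤ) ^ (n - (m'+1)) * (stirling1 n (m'+1) : ℤ) * (-(n : ℤ)) ^ (m'+1)
      = (∑ h ∈ Finset.range (n+1),
          (stirling1 n (h+1) : ℤ) * ((-(n:ℤ))^(h-m') * (h.choose m' : ℤ))) * (-(n:ℤ))^(m'+1) := by
        rw [hcoeff]
    _ = ∑ h ∈ Finset.Ico m' n,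
          (stirling1 n (h+1) : ℤ) * ((-(n:ℤ))^(h-m') * (h.choose m' : ℤ)) * (-(n:ℤ))^(m'+1) := by
        rw [Finset.sum_mul]
        refine (Finset.sum_subset ?_ ?_).symm
        · intro x hx
          simp only [Finset.mem_Ico, Finset.mem_range] at *
          omega
        · intro x hx hx2
          simp only [Finset.mem_Ico, Finset.mem_range] at *
          rcases lt_or_ge x m' with h | h
          · rw [Nat.choose_eq_zero_of_lt h]; simp
          · have hxn : x = n := by omega
            rw [hxn, stirling1_eq_zero n (n+1) (by omega)]; simp
    _ = ∑ h ∈ Finset.Icc (m'+1) n, ((h - 1).choose m' : ℤ) * stirling1 n h * (-(n : ℤ)) ^ h := by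
        rw [← Finset.Ico_add_one_right_eq_Icc, ← Finset.map_add_right_Ico _ _ 1, Finset.sum_map]
        refine Finset.sum_congr rfl fun h hh => ?_
        simp only [Finset.mem_Ico, addRightEmbedding_apply] at *
        have h1 : h + 1 - 1 = h := rfl
        have h2 : (-(n:ℤ))^(h-m') * (-(n:ℤ))^(m'+1) = (-(n:ℤ))^(h+1) := by
          rw [← pow_add]; congr 1; omega
        rw [h1]
        calc (stirling1 n (h+1) : ℤ) * ((-(n:ℤ))^(h-m') * (h.choose m' : ℤ)) * (-(n:ℤ))^(m'+1)
            = (h.choose m' : ℤ) * stirling1 n (h+1) * ((-(n:ℤ))^(h-m') * (-(n:ℤ))^(m'+1)) := by ring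
          _ = (h.choose m' : ℤ) * stirling1 n (h+1) * (-(n:ℤ))^(h+1) := by rw [h2]
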